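/- arXiv:1906.08604 — 2 statements merged into one kernel-verified Lean document; each statement's English description precedes it below -/
import Mathlib

section
/- Let d ≥ 2, 0 < α < d - 1, and let C₁, C₂ ∈ ℝ. Then, as μ → 0⁺, ∫₀^∞ ( |C₁ r^{-α} + C₂ r^{-α-1}| - μ )_+ r^{d-1} dr = (α/(d(d-α))) |C₁|^{d/α} μ^{1 - d/α} + (1/(d-α-1)) sgn(C₁) |C₁|^{(d-α-1)/α} C₂ μ^{1 - (d-1)/α} + o(μ^{1-(d-1)/α}). -/
/-!
For `C₁ > 0` the profile `f r = C₁ r^(-α) + C₂ r^(-α-1)` is positive and decreasing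
beyond some `r₁`, so for small `μ` the integrand vanishes beyond the point `R` with `f R = μ`,
and `R → ∞` as `μ → 0⁺`. The part of the integral over `(0, r₁]` stays bounded, while the part
over `[r₁, R]` is elementary: up to `O(1)` the integral equals
`(1/(d-α) - 1/d) C₁ R^(d-α) + (1/(d-α-1) - 1/d) C₂ R^(d-α-1)`. Expanding
`μ = R^(-α) (C₁ + C₂/R)` to first order in `1/R` turns this into the two stated terms with an
error `o(R^(d-α-1)) = o(μ^(1-(d-1)/α))`, and `O(1)` is negligible because
`μ^(1-(d-1)/α) → ∞`. The case `C₁ < 0` follows by changing the signs of `C₁, C₂`; for `C₁ = 0`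
the integral is homogeneous of degree `1 - d/(α+1)` in `μ`, a smaller order.
-/

open MeasureTheory Complex Filter Metric Set Asymptotics
open scoped Topology

lemma isLittleO_rpow_nhdsGT_zero {a b : ℝ} (hab : b < a) :
    (fun μ : ℝ => μ ^ a) =o[𝓝[>] 0] fun μ => μ ^ b := by
  have hsmall : (fun μ : ℝ => μ ^ (a - b)) =o[𝓝[>] 0] fun _ => (1 : ℝ) := by
    rw [isLittleO_one_iff]
    have := (Real.continuousAt_rpow_const 0 (a - b) (Or.inr (sub_pos.2 hab).le)).tendsto
    rw [Real.zero_rpow (sub_pos.2 hab).ne'] at this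
    exact this.mono_left nhdsWithin_le_nhds
  refine (hsmall.mul_isBigO (isBigO_refl (fun μ : ℝ => μ ^ b) _)).congr' ?_ (by simp)
  filter_upwards [self_mem_nhdsWithin] with μ hμ
  rw [← Real.rpow_add hμ, sub_add_cancel]

lemma tendsto_mul_rpow_add_inv_sub_rpow {c : ℝ} (hc : 0 < c) (e p : ℝ) :
    Tendsto (fun R : ℝ => R * ((c + e * R⁻¹) ^ p - c ^ p)) atTop (𝓝 (e * p * c ^ (p - 1))) := by
  have hderiv : HasDerivAt (fun x : ℝ => (c + e * x) ^ p) (e * p * c ^ (p - 1)) 0 := by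
    simpa using (((hasDerivAt_id (0 : ℝ)).const_mul e).const_add c).rpow_const
      (p := p) (Or.inl (by simpa using hc.ne'))
  refine (hderiv.tendsto_slope_zero_right.comp tendsto_inv_atTop_nhdsGT_zero).congr fun R => ?_
  simp

lemma exists_rightInverse_of_antitoneOn {f : ℝ → ℝ} {a : ℝ} (hf : ContinuousOn f (Ici a))
    (hanti : AntitoneOn f (Ici a)) (hpos : ∀ r ≥ a, 0 < f r) (hlim : Tendsto f atTop (𝓝 0)) :
    ∃ R : ℝ → ℝ, (∀ᶠ μ in 𝓝[>] 0, a ≤ R μ ∧ f (R μ) = μ) ∧ Tendsto R (𝓝[>] 0) atTop := by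
  have hivt : ∀ μ ∈ Ioo 0 (f a), ∃ r, a ≤ r ∧ f r = μ := by
    intro μ hμ
    obtain ⟨M, hfM, haM⟩ := ((hlim.eventually_lt_const hμ.1).and (eventually_ge_atTop a)).exists
    obtain ⟨r, hr, hfr⟩ :=
      intermediate_value_Icc' haM (hf.mono Icc_subset_Ici_self) ⟨hfM.le, hμ.2.le⟩
    exact ⟨r, hr.1, hfr⟩
  choose! R hR using hivt
  refine ⟨R, eventually_of_mem (Ioo_mem_nhdsGT (hpos a le_rfl)) hR, tendsto_atTop.2 fun M => ?_⟩
  have hM : a ≤ max M a := le_max_right M a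
  filter_upwards [Ioo_mem_nhdsGT (hpos _ hM)] with μ hμ
  have hμa : μ ∈ Ioo 0 (f a) := ⟨hμ.1, hμ.2.trans_le (hanti self_mem_Ici hM hM)⟩
  obtain ⟨haR, hfR⟩ := hR μ hμa
  by_contra! hRM
  have := hanti haR hM (hRM.trans_le (le_max_left M a)).le
  linarith [hμ.2]

noncomputable section

namespace RieszMeans

variable {C₁ C₂ α d μ r : ℝ}

def profile (C₁ C₂ α r : ℝ) : ℝ := C₁ * r ^ (-α) + C₂ * r ^ (-α - 1)

def radialIntegrand (C₁ C₂ α d μ r : ℝ) : ℝ := max (|profile C₁ C₂ α r| - μ) 0 * r ^ (d - 1)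

def radialIntegral (C₁ C₂ α d μ : ℝ) : ℝ := ∫ r in Ioi 0, radialIntegrand C₁ C₂ α d μ r

def radialPrimitive (C₁ C₂ α d μ r : ℝ) : ℝ :=
  C₁ * r ^ (d - α) / (d - α) + C₂ * r ^ (d - α - 1) / (d - α - 1) - μ * r ^ d / d

lemma radialIntegral_neg : radialIntegral (-C₁) (-C₂) α d μ = radialIntegral C₁ C₂ α d μ := by
  have : ∀ r, profile (-C₁) (-C₂) α r = -profile C₁ C₂ α r := fun r => by
    simp only [profile]; ring
  simp only [radialIntegral, radialIntegrand, this, abs_neg]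

lemma profile_mul_rpow (hr : 0 < r) (e : ℝ) :
    profile C₁ C₂ α r * r ^ e = C₁ * r ^ (e - α) + C₂ * r ^ (e - α - 1) := by
  simp only [profile, add_mul, mul_assoc, ← Real.rpow_add hr]
  ring_nf

lemma profile_eq_rpow_mul (hr : 0 < r) :
    profile C₁ C₂ α r = r ^ (-α) * (C₁ + C₂ * r⁻¹) := by
  simp only [profile, sub_eq_add_neg (-α), Real.rpow_add hr, Real.rpow_neg_one]
  ring

lemma hasDerivAt_profile (hr : 0 < r) :
    HasDerivAt (profile C₁ C₂ α) (-(α * C₁ * r + (α + 1) * C₂) * r ^ (-α - 2)) r := by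
  have h := ((Real.hasDerivAt_rpow_const (p := -α) (Or.inl hr.ne')).const_mul C₁).add
    ((Real.hasDerivAt_rpow_const (p := -α - 1) (Or.inl hr.ne')).const_mul C₂)
  refine h.congr_deriv ?_
  rw [show -α - 1 - 1 = -α - 2 by ring, show -α - 1 = 1 + (-α - 2) by ring,
    Real.rpow_add hr, Real.rpow_one]
  ring

lemma tendsto_profile_atTop (hα : 0 < α) : Tendsto (profile C₁ C₂ α) atTop (𝓝 0) := by
  unfold profile
  have h₁ := (tendsto_rpow_neg_atTop hα).const_mul C₁
  have h₂ := (tendsto_rpow_neg_atTop (add_pos hα one_pos)).const_mul C₂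
  rw [neg_add'] at h₂
  simpa using h₁.add h₂

lemma exists_pos_antitoneOn_profile (hα : 0 < α) (hC₁ : 0 < C₁) :
    ∃ r₁ > 0, (∀ r ≥ r₁, 0 < profile C₁ C₂ α r) ∧ AntitoneOn (profile C₁ C₂ α) (Ici r₁) := by
  -- Beyond `r₁` the term `α C₁ r` dominates `(α + 1) |C₂|`, which makes both
  -- `C₁ r + C₂ = r^(α+1) f r` and `α C₁ r + (α + 1) C₂ = -r^(α+2) f' r` positive.
  set r₁ := (α + 1) * |C₂| / (α * C₁) + 1
  have hr₁ : 0 < r₁ := by positivity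
  have hdom : ∀ r ≥ r₁, (α + 1) * |C₂| < α * C₁ * r := fun r hr => by
    have : (α + 1) * |C₂| = α * C₁ * ((α + 1) * |C₂| / (α * C₁)) := by field_simp
    rw [this]
    exact mul_lt_mul_of_pos_left (by linarith) (by positivity)
  refine ⟨r₁, hr₁, fun r hr => ?_, ?_⟩
  · have hr0 : 0 < r := hr₁.trans_le hr
    have h := profile_mul_rpow (C₁ := C₁) (C₂ := C₂) (α := α) hr0 (α + 1)
    rw [show α + 1 - α = 1 by ring, sub_self, Real.rpow_one,
      Real.rpow_zero, mul_one] at h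
    have : 0 < C₁ * r + C₂ := by nlinarith [hdom r hr, neg_abs_le C₂, abs_nonneg C₂]
    exact pos_of_mul_pos_left (h ▸ this) (Real.rpow_nonneg hr0.le _)
  · have hderiv : ∀ x ∈ Ici r₁, HasDerivAt (profile C₁ C₂ α)
        (-(α * C₁ * x + (α + 1) * C₂) * x ^ (-α - 2)) x :=
      fun x hx => hasDerivAt_profile (hr₁.trans_le hx)
    refine antitoneOn_of_deriv_nonpos (convex_Ici r₁)
      (fun x hx => (hderiv x hx).continuousAt.continuousWithinAt)
      (fun x hx => (hderiv x (interior_subset hx)).differentiableAt.differentiableWithinAt)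
      fun x hx => ?_
    rw [(hderiv x (interior_subset hx)).deriv]
    have hx : r₁ ≤ x := interior_subset hx
    have : 0 < α * C₁ * x + (α + 1) * C₂ := by nlinarith [hdom x hx, neg_abs_le C₂]
    have := Real.rpow_pos_of_pos (hr₁.trans_le hx) (-α - 2)
    nlinarith

lemma profile_rpow {R : ℝ} (hR : 0 < R) (hy : 0 < C₁ + C₂ * R⁻¹) (p : ℝ) :
    profile C₁ C₂ α R ^ p = R ^ (-α * p) * (C₁ + C₂ * R⁻¹) ^ p := by
  rw [profile_eq_rpow_mul hR, Real.mul_rpow (Real.rpow_nonneg hR.le _) hy.le,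
    ← Real.rpow_mul hR.le]

lemma abs_radialIntegrand_le (hμ : 0 ≤ μ) (hr : 0 < r) :
    |radialIntegrand C₁ C₂ α d μ r| ≤ |C₁| * r ^ (d - 1 - α) + |C₂| * r ^ (d - 1 - α - 1) := by
  have hw := Real.rpow_pos_of_pos hr (d - 1)
  rw [radialIntegrand, abs_of_nonneg (mul_nonneg (le_max_right _ _) hw.le)]
  calc max (|profile C₁ C₂ α r| - μ) 0 * r ^ (d - 1)
      ≤ |profile C₁ C₂ α r| * r ^ (d - 1) :=
        mul_le_mul_of_nonneg_right (max_le (by linarith) (abs_nonneg _)) hw.le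
    _ = |C₁ * r ^ (d - 1 - α) + C₂ * r ^ (d - 1 - α - 1)| := by
        rw [← profile_mul_rpow hr, abs_mul, abs_of_pos hw]
    _ ≤ |C₁| * r ^ (d - 1 - α) + |C₂| * r ^ (d - 1 - α - 1) := by
        refine (abs_add_le _ _).trans_eq ?_
        rw [abs_mul, abs_mul, abs_of_pos (Real.rpow_pos_of_pos hr _),
          abs_of_pos (Real.rpow_pos_of_pos hr _)]

lemma intervalIntegrable_radialIntegrand_bound (hαd : α + 1 < d) (s : ℝ) :
    IntervalIntegrable (fun r => |C₁| * r ^ (d - 1 - α) + |C₂| * r ^ (d - 1 - α - 1)) volume 0 s :=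
  ((intervalIntegral.intervalIntegrable_rpow' (by linarith)).const_mul _).add
    ((intervalIntegral.intervalIntegrable_rpow' (by linarith)).const_mul _)

lemma intervalIntegrable_radialIntegrand (hαd : α + 1 < d) (hμ : 0 ≤ μ) {s : ℝ} (hs : 0 ≤ s) :
    IntervalIntegrable (radialIntegrand C₁ C₂ α d μ) volume 0 s := by
  refine (intervalIntegrable_radialIntegrand_bound (C₁ := C₁) (C₂ := C₂) hαd s).mono_fun'
    (by unfold radialIntegrand profile; fun_prop : Measurable _).aestronglyMeasurable ?_
  rw [uIoc_of_le hs]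
  filter_upwards [ae_restrict_mem measurableSet_Ioc] with r hr
  exact abs_radialIntegrand_le hμ hr.1

lemma isBigO_integral_radialIntegrand (hαd : α + 1 < d) {s : ℝ} (hs : 0 ≤ s) :
    (fun μ => ∫ r in 0..s, radialIntegrand C₁ C₂ α d μ r) =O[𝓝[>] 0] fun _ => (1 : ℝ) := by
  refine IsBigO.of_bound (∫ r in 0..s, |C₁| * r ^ (d - 1 - α) + |C₂| * r ^ (d - 1 - α - 1)) ?_
  filter_upwards [self_mem_nhdsWithin] with μ hμ
  rw [norm_one, mul_one]
  exact intervalIntegral.norm_integral_le_of_norm_le hs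
    (ae_of_all _ fun r hr => abs_radialIntegrand_le (le_of_lt hμ) hr.1)
    (intervalIntegrable_radialIntegrand_bound hαd s)

lemma hasDerivAt_radialPrimitive (hr : 0 < r) (hd : d ≠ 0) (hdα : d - α ≠ 0)
    (hdα₁ : d - α - 1 ≠ 0) :
    HasDerivAt (radialPrimitive C₁ C₂ α d μ) ((profile C₁ C₂ α r - μ) * r ^ (d - 1)) r := by
  have h := ((((Real.hasDerivAt_rpow_const (p := d - α) (Or.inl hr.ne')).const_mul C₁).div_const
    (d - α)).add (((Real.hasDerivAt_rpow_const (p := d - α - 1) (Or.inl hr.ne')).const_mul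
    C₂).div_const (d - α - 1))).sub
    (((Real.hasDerivAt_rpow_const (p := d) (Or.inl hr.ne')).const_mul μ).div_const d)
  refine h.congr_deriv ?_
  rw [sub_mul (profile C₁ C₂ α r), profile_mul_rpow hr,
    show d - 1 - α = d - α - 1 by ring]
  field_simp

lemma integral_profile_sub_mul_rpow {s R : ℝ} (hs : 0 < s) (hsR : s ≤ R) (hd : d ≠ 0)
    (hdα : d - α ≠ 0) (hdα₁ : d - α - 1 ≠ 0) :
    ∫ r in s..R, (profile C₁ C₂ α r - μ) * r ^ (d - 1) =
      radialPrimitive C₁ C₂ α d μ R - radialPrimitive C₁ C₂ α d μ s := by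
  have hpos : ∀ x ∈ uIcc s R, 0 < x := fun x hx => hs.trans_le (uIcc_of_le hsR ▸ hx).1
  refine intervalIntegral.integral_eq_sub_of_hasDerivAt
    (fun x hx => hasDerivAt_radialPrimitive (hpos x hx) hd hdα hdα₁)
    (ContinuousOn.intervalIntegrable fun x hx => ?_)
  have hx := hpos x hx
  exact (((hasDerivAt_profile hx).continuousAt.sub continuousAt_const).mul
    (Real.continuousAt_rpow_const _ _ (Or.inl hx.ne'))).continuousWithinAt

lemma radialPrimitive_profile {R : ℝ} (hR : 0 < R) :
    radialPrimitive C₁ C₂ α d (profile C₁ C₂ α R) R =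
      (1 / (d - α) - 1 / d) * C₁ * R ^ (d - α)
        + (1 / (d - α - 1) - 1 / d) * C₂ * R ^ (d - α - 1) := by
  rw [radialPrimitive, profile_mul_rpow hR d]
  ring

lemma radialIntegral_eq_of_antitoneOn {r₁ R : ℝ} (hα : 0 < α) (hαd : α + 1 < d) (hμ : 0 < μ)
    (hr₁ : 0 < r₁) (hr₁R : r₁ ≤ R) (hpos : ∀ r ≥ r₁, 0 < profile C₁ C₂ α r)
    (hanti : AntitoneOn (profile C₁ C₂ α) (Ici r₁)) (hR : profile C₁ C₂ α R = μ) :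
    radialIntegral C₁ C₂ α d μ = (∫ r in 0..r₁, radialIntegrand C₁ C₂ α d μ r) +
      (radialPrimitive C₁ C₂ α d μ R - radialPrimitive C₁ C₂ α d μ r₁) := by
  have hR₀ : 0 < R := hr₁.trans_le hr₁R
  have htail : ∀ r ∈ Ioi 0 \ Ioc 0 R, radialIntegrand C₁ C₂ α d μ r = 0 := by
    rintro r ⟨hr, hrR⟩
    have hRr : R ≤ r := le_of_lt (not_le.1 fun h => hrR ⟨hr, h⟩)
    have hle : profile C₁ C₂ α r ≤ μ := hR ▸ hanti hr₁R (hr₁R.trans hRr) hRr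
    rw [radialIntegrand, abs_of_pos (hpos r (hr₁R.trans hRr)),
      max_eq_right (sub_nonpos.2 hle), zero_mul]
  have hmid : EqOn (radialIntegrand C₁ C₂ α d μ)
      (fun r => (profile C₁ C₂ α r - μ) * r ^ (d - 1)) (uIcc r₁ R) := by
    intro r hr
    rw [uIcc_of_le hr₁R] at hr
    have hge : μ ≤ profile C₁ C₂ α r := hR ▸ hanti hr.1 hr₁R hr.2
    rw [radialIntegrand, abs_of_pos (hpos r hr.1), max_eq_left (sub_nonneg.2 hge)]
  have hint := intervalIntegrable_radialIntegrand (C₁ := C₁) (C₂ := C₂) hαd hμ.le hR₀.le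
  rw [radialIntegral, setIntegral_eq_of_subset_of_forall_sdiff_eq_zero measurableSet_Ioi
      Ioc_subset_Ioi_self htail, ← intervalIntegral.integral_of_le hR₀.le,
    ← intervalIntegral.integral_add_adjacent_intervals
      (hint.mono_set (uIcc_subset_uIcc left_mem_uIcc (mem_uIcc_of_le hr₁.le hr₁R)))
      (hint.mono_set (uIcc_subset_uIcc (mem_uIcc_of_le hr₁.le hr₁R) right_mem_uIcc)),
    intervalIntegral.integral_congr hmid,
    integral_profile_sub_mul_rpow hr₁ hr₁R (by linarith) (by linarith) (by linarith)]

/-- With `μ = R^(-α) (C₁ + C₂/R)`, this is where the coefficient `1/(d-α-1)` comes from: the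
first-order correction to `μ^(1-d/α)` cancels against the `C₂` terms. -/
lemma tendsto_firstOrder_remainder (hα : α ≠ 0) (hC₁ : 0 < C₁) (hd : d ≠ 0) (hdα : d - α ≠ 0) :
    Tendsto (fun R : ℝ => -(α / (d * (d - α)) * C₁ ^ (d / α)) *
        (R * ((C₁ + C₂ * R⁻¹) ^ (1 - d / α) - C₁ ^ (1 - d / α)))
        + (1 / (d - α - 1) - 1 / d) * C₂
        - 1 / (d - α - 1) * C₁ ^ ((d - α - 1) / α) * C₂ * (C₁ + C₂ * R⁻¹) ^ (1 - (d - 1) / α))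
      atTop (𝓝 0) := by
  have hy : Tendsto (fun R : ℝ => C₁ + C₂ * R⁻¹) atTop (𝓝 C₁) := by
    simpa using (tendsto_inv_atTop_zero.const_mul C₂).const_add C₁
  have e₁ : C₁ ^ (d / α) * C₁ ^ (1 - d / α - 1) = 1 := by
    rw [← Real.rpow_add hC₁, show d / α + (1 - d / α - 1) = 0 by ring, Real.rpow_zero]
  have e₂ : C₁ ^ ((d - α - 1) / α) * C₁ ^ (1 - (d - 1) / α) = 1 := by
    rw [← Real.rpow_add hC₁, show (d - α - 1) / α + (1 - (d - 1) / α) = 0 by field_simp; ring,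
      Real.rpow_zero]
  have e₃ : α / (d * (d - α)) * (1 - d / α) = -1 / d := by field_simp; ring
  convert (((tendsto_mul_rpow_add_inv_sub_rpow hC₁ C₂ (1 - d / α)).const_mul _).add_const
    ((1 / (d - α - 1) - 1 / d) * C₂)).sub
    ((hy.rpow_const (p := 1 - (d - 1) / α) (Or.inl hC₁.ne')).const_mul _) using 2
  linear_combination (α / (d * (d - α)) * C₂ * (1 - d / α)) * e₁ + C₂ / (d - α - 1) * e₂
    + C₂ * e₃

lemma isLittleO_radialPrimitive_profile_sub (hα : α ≠ 0) (hC₁ : 0 < C₁) (hd : d ≠ 0)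
    (hdα : d - α ≠ 0) :
    (fun R => radialPrimitive C₁ C₂ α d (profile C₁ C₂ α R) R
        - α / (d * (d - α)) * C₁ ^ (d / α) * profile C₁ C₂ α R ^ (1 - d / α)
        - 1 / (d - α - 1) * C₁ ^ ((d - α - 1) / α) * C₂ * profile C₁ C₂ α R ^ (1 - (d - 1) / α))
      =o[atTop] fun R => profile C₁ C₂ α R ^ (1 - (d - 1) / α) := by
  -- By `profile_rpow`, the quotient is the expression of `tendsto_firstOrder_remainder`
  -- divided by `(C₁ + C₂/R)^(1-(d-1)/α)`.
  have hy : Tendsto (fun R : ℝ => C₁ + C₂ * R⁻¹) atTop (𝓝 C₁) := by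
    simpa using (tendsto_inv_atTop_zero.const_mul C₂).const_add C₁
  have hyb := hy.rpow_const (p := 1 - (d - 1) / α) (Or.inl hC₁.ne')
  have hlim := (tendsto_firstOrder_remainder (C₂ := C₂) hα hC₁ hd hdα).div hyb
    (Real.rpow_pos_of_pos hC₁ _).ne'
  rw [zero_div] at hlim
  have hC₁a : C₁ ^ (d / α) * C₁ ^ (1 - d / α) = C₁ := by
    rw [← Real.rpow_add hC₁, add_sub_cancel, Real.rpow_one]
  have hc : α / (d * (d - α)) = 1 / (d - α) - 1 / d := by field_simp; ring
  have hev := (eventually_gt_atTop 0).and (hy.eventually_const_lt hC₁)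
  rw [isLittleO_iff_tendsto' (hev.mono fun R ⟨hR, hyR⟩ h => absurd h
    (by rw [profile_rpow hR hyR]; positivity))]
  refine hlim.congr' (hev.mono fun R ⟨hR, hyR⟩ => ?_)
  have hX := Real.rpow_pos_of_pos hR (d - α - 1)
  have hY := Real.rpow_pos_of_pos hyR (1 - (d - 1) / α)
  have hRd : R ^ (d - α) = R * R ^ (d - α - 1) := by
    rw [← Real.rpow_one_add' hR.le (by simpa using hdα)]; ring_nf
  simp only [Pi.div_apply]
  rw [radialPrimitive_profile hR, profile_rpow hR hyR, profile_rpow hR hyR,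
    show -α * (1 - d / α) = d - α by field_simp; ring,
    show -α * (1 - (d - 1) / α) = d - α - 1 by field_simp; ring, hRd,
    div_eq_div_iff hY.ne' (mul_pos hX hY).ne']
  linear_combination (R * R ^ (d - α - 1) * (C₁ + C₂ * R⁻¹) ^ (1 - (d - 1) / α)) *
    (α / (d * (d - α)) * hC₁a + C₁ * hc)

theorem isLittleO_radialIntegral_sub (hα : 0 < α) (hαd : α + 1 < d) (hC₁ : 0 < C₁) :
    (fun μ => radialIntegral C₁ C₂ α d μ - α / (d * (d - α)) * C₁ ^ (d / α) * μ ^ (1 - d / α)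
        - 1 / (d - α - 1) * C₁ ^ ((d - α - 1) / α) * C₂ * μ ^ (1 - (d - 1) / α))
      =o[𝓝[>] 0] fun μ => μ ^ (1 - (d - 1) / α) := by
  obtain ⟨r₁, hr₁, hpos, hanti⟩ := exists_pos_antitoneOn_profile (C₂ := C₂) hα hC₁
  obtain ⟨R, hR, hRtop⟩ := exists_rightInverse_of_antitoneOn
    (fun r hr => (hasDerivAt_profile (hr₁.trans_le hr)).continuousAt.continuousWithinAt)
    hanti hpos (tendsto_profile_atTop hα)
  have hb : 1 - (d - 1) / α < 0 := by rw [sub_neg, one_lt_div hα]; linarith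
  have hbounded : (fun μ => (∫ r in 0..r₁, radialIntegrand C₁ C₂ α d μ r)
      - radialPrimitive C₁ C₂ α d μ r₁) =O[𝓝[>] 0] fun _ => (1 : ℝ) :=
    (isBigO_integral_radialIntegrand hαd hr₁.le).sub
      (((by unfold radialPrimitive; fun_prop : Continuous fun μ =>
        radialPrimitive C₁ C₂ α d μ r₁).tendsto 0).mono_left nhdsWithin_le_nhds |>.isBigO_one ℝ)
  have hfar := (isLittleO_radialPrimitive_profile_sub (C₂ := C₂) (d := d) hα.ne' hC₁ (by linarith)
    (by linarith)).comp_tendsto hRtop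
  refine ((hbounded.trans_isLittleO ((isLittleO_rpow_nhdsGT_zero hb).congr_left
    Real.rpow_zero)).add (hfar.congr' EventuallyEq.rfl ?_)).congr' ?_ EventuallyEq.rfl
  · filter_upwards [hR] with μ hμ
    simp only [Function.comp_apply, hμ.2]
  · filter_upwards [hR, self_mem_nhdsWithin] with μ hμ hμ₀
    simp only [Function.comp_apply, hμ.2]
    rw [radialIntegral_eq_of_antitoneOn hα hαd hμ₀ hr₁ hμ.1 hpos hanti hμ.2]
    ring

lemma radialIntegral_zero_left (hα : α + 1 ≠ 0) (hμ : 0 < μ) :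
    radialIntegral 0 C₂ α d μ = μ ^ (1 - d / (α + 1)) * radialIntegral 0 C₂ α d 1 := by
  -- The substitution `r = t x` with `t^(-α-1) = μ` scales `μ` out of the integrand.
  set t := μ ^ (-(α + 1)⁻¹)
  have ht : 0 < t := Real.rpow_pos_of_pos hμ _
  have htα : t ^ (-α - 1) = μ := by
    rw [← Real.rpow_mul hμ.le, show -(α + 1)⁻¹ * (-α - 1) = 1 by field_simp; ring, Real.rpow_one]
  have hscale : ∀ x ∈ Ioi (0 : ℝ), radialIntegrand 0 C₂ α d μ (t * x) =
      μ * t ^ (d - 1) * radialIntegrand 0 C₂ α d 1 x := by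
    intro x hx
    simp only [radialIntegrand, profile, zero_mul, zero_add,
      Real.mul_rpow ht.le (le_of_lt hx), htα, mul_left_comm C₂ μ, abs_mul μ, abs_of_pos hμ]
    rw [show max (μ * |C₂ * x ^ (-α - 1)| - μ) 0 = μ * max (|C₂ * x ^ (-α - 1)| - 1) 0 by
      rw [mul_max_of_nonneg _ _ hμ.le, mul_zero, mul_sub, mul_one]]
    ring
  have hpow : t * (μ * t ^ (d - 1)) = μ ^ (1 - d / (α + 1)) := by
    rw [show t * (μ * t ^ (d - 1)) = μ * (t ^ (1 : ℝ) * t ^ (d - 1)) by rw [Real.rpow_one]; ring,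
      ← Real.rpow_add ht, add_sub_cancel,
      ← Real.rpow_mul hμ.le, show 1 - d / (α + 1) = 1 + -(α + 1)⁻¹ * d by ring,
      Real.rpow_add hμ, Real.rpow_one]
  calc radialIntegral 0 C₂ α d μ = t * ∫ x in Ioi 0, radialIntegrand 0 C₂ α d μ (t * x) := by
        rw [integral_comp_mul_left_Ioi _ _ ht, mul_zero, smul_eq_mul,
          mul_inv_cancel_left₀ ht.ne', radialIntegral]
    _ = μ ^ (1 - d / (α + 1)) * radialIntegral 0 C₂ α d 1 := by
        rw [setIntegral_congr_fun measurableSet_Ioi hscale, integral_const_mul, ← mul_assoc,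
          hpow, radialIntegral]

theorem isLittleO_radialIntegral_zero_left (hα : 0 < α) (hαd : α + 1 < d) :
    (fun μ => radialIntegral 0 C₂ α d μ) =o[𝓝[>] 0] fun μ => μ ^ (1 - (d - 1) / α) := by
  have hexp : 1 - (d - 1) / α < 1 - d / (α + 1) := by
    rw [sub_lt_sub_iff_left, div_lt_div_iff₀ (by linarith) hα]
    nlinarith
  refine ((isLittleO_rpow_nhdsGT_zero hexp).const_mul_left (radialIntegral 0 C₂ α d 1)).congr'
    ?_ EventuallyEq.rfl
  filter_upwards [self_mem_nhdsWithin] with μ hμ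
  rw [radialIntegral_zero_left (by linarith) hμ, mul_comm]

end RieszMeans

end

theorem riesz_means_radial_integral_asymptotics_general
    {d : ℕ} (α : ℝ) (hα : 0 < α) (hαd : α < (d : ℝ) - 1)
    (C₁ C₂ : ℝ) :
    (fun μ : ℝ =>
        (∫ r in Set.Ioi (0 : ℝ),
            max (|C₁ * r ^ (-α) + C₂ * r ^ (-α - 1)| - μ) 0 * r ^ ((d : ℝ) - 1))
          - α / (d * ((d : ℝ) - α)) * |C₁| ^ ((d : ℝ) / α) * μ ^ (1 - (d : ℝ) / α)
          - 1 / ((d : ℝ) - α - 1) * Real.sign C₁ * |C₁| ^ (((d : ℝ) - α - 1) / α) * C₂ *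
              μ ^ (1 - ((d : ℝ) - 1) / α))
      =o[𝓝[>] (0 : ℝ)] fun μ => μ ^ (1 - ((d : ℝ) - 1) / α) := by
  have hαd' : α + 1 < d := by linarith
  change (fun μ => RieszMeans.radialIntegral C₁ C₂ α d μ - _ - _) =o[_] _
  rcases lt_trichotomy C₁ 0 with hC₁ | rfl | hC₁
  · refine (RieszMeans.isLittleO_radialIntegral_sub (C₂ := -C₂) hα hαd' (neg_pos.2 hC₁)).congr
      (fun μ => ?_) fun _ => rfl
    rw [RieszMeans.radialIntegral_neg, Real.sign_of_neg hC₁, abs_of_neg hC₁]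
    ring
  · simpa [Real.sign_zero, Real.zero_rpow (div_pos (by linarith : (0 : ℝ) < d) hα).ne']
      using RieszMeans.isLittleO_radialIntegral_zero_left (C₂ := C₂) hα hαd'
  · simpa [Real.sign_of_pos hC₁, abs_of_pos hC₁]
      using RieszMeans.isLittleO_radialIntegral_sub (C₂ := C₂) hα hαd' hC₁

theorem riesz_means_radial_integral_asymptotics
    {d : ℕ} (hd : 2 ≤ d) (α : ℝ) (hα : 0 < α) (hαd : α < (d : ℝ) - 1)
    (C₁ C₂ : ℝ) :
    (fun μ : ℝ =>
        (∫ r in Set.Ioi (0 : ℝ),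
            max (|C₁ * r ^ (-α) + C₂ * r ^ (-α - 1)| - μ) 0 * r ^ ((d : ℝ) - 1))
          - α / (d * ((d : ℝ) - α)) * |C₁| ^ ((d : ℝ) / α) * μ ^ (1 - (d : ℝ) / α)
          - 1 / ((d : ℝ) - α - 1) * Real.sign C₁ * |C₁| ^ (((d : ℝ) - α - 1) / α) * C₂ *
              μ ^ (1 - ((d : ℝ) - 1) / α))
      =o[𝓝[>] (0 : ℝ)] fun μ => μ ^ (1 - ((d : ℝ) - 1) / α) :=
  riesz_means_radial_integral_asymptotics_general α hα hαd C₁ C₂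
end

section
/- Let d ≥ 2, α > 0, C₁ > 0 and C₂ ≥ 0, and for μ > 0 let h(r) = C₁ r^{-α} + C₂ r^{-α-1} on (0,∞). Then h is strictly decreasing from +∞ to 0, so the equation h(r) = μ has a unique solution r⁺(μ) ∈ (0,∞), and r⁺(μ) = C₁^{1/α} μ^{-1/α} + C₂/(α C₁) + o(1) as μ → 0⁺. -/
/-!
`h = C₁ r^{-α} + C₂ r^{-α-1}` with `C₁ > 0 ≤ C₂` decreases strictly from `+∞` to `0`, so every
level `μ > 0` is attained exactly once. For the asymptotics put `s = (C₁ / μ)^{1/α}`, so that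
`C₁ s^{-α} = μ`. Expanding `(s + t)^{-α}` to first order in `t / s` gives
`s^{α+1} (h(s + t) - C₁ s^{-α}) → C₂ - α C₁ t` as `s → ∞`. Hence for `a < c = C₂ / (α C₁) < b`
eventually `h(s + b) < μ < h(s + a)`, and monotonicity traps the root in `(s + a, s + b)`.
-/

open Filter Set
open scoped Topology

noncomputable def powerDecay (α C₁ C₂ r : ℝ) : ℝ := C₁ * r ^ (-α) + C₂ * r ^ (-α - 1)

lemma tendsto_mul_one_add_div_rpow_sub_one (p t : ℝ) :
    Tendsto (fun s : ℝ => s * ((1 + t / s) ^ p - 1)) atTop (𝓝 (p * t)) := by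
  rcases eq_or_ne t 0 with rfl | ht
  · simp
  have hderiv : HasDerivAt (fun x : ℝ => (1 + x) ^ p) p 0 := by
    simpa using ((hasDerivAt_id (0 : ℝ)).const_add 1).rpow_const (p := p) (Or.inl (by norm_num))
  have hdiv : Tendsto (fun s : ℝ => t / s) atTop (𝓝[≠] 0) :=
    tendsto_nhdsWithin_of_tendsto_nhds_of_eventually_within _
      (tendsto_const_nhds.div_atTop tendsto_id)
      (by filter_upwards [eventually_gt_atTop 0] with s hs using div_ne_zero ht hs.ne')
  have h := (hderiv.tendsto_slope_zero.comp hdiv).const_mul t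
  rw [mul_comm t p] at h
  refine h.congr' ?_
  filter_upwards [eventually_ne_atTop 0] with s hs
  simp only [Function.comp_def, zero_add, add_zero, Real.one_rpow, smul_eq_mul]
  field_simp

section powerDecay

variable {α C₁ C₂ : ℝ}

lemma strictAntiOn_powerDecay (hα : 0 < α) (hC₁ : 0 < C₁) (hC₂ : 0 ≤ C₂) :
    StrictAntiOn (powerDecay α C₁ C₂) (Ioi 0) := by
  intro x hx y _ hxy
  have h₁ : y ^ (-α) < x ^ (-α) := Real.rpow_lt_rpow_of_neg hx hxy (by linarith)
  have h₂ : y ^ (-α - 1) ≤ x ^ (-α - 1) :=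
    Real.rpow_le_rpow_of_nonpos hx hxy.le (by linarith)
  exact add_lt_add_of_lt_of_le (mul_lt_mul_of_pos_left h₁ hC₁)
    (mul_le_mul_of_nonneg_left h₂ hC₂)

lemma continuousOn_powerDecay : ContinuousOn (powerDecay α C₁ C₂) (Ioi 0) := by
  intro x (hx : 0 < x)
  have hrpow (p : ℝ) : ContinuousAt (· ^ p) x := Real.continuousAt_rpow_const x p (Or.inl hx.ne')
  exact ((continuousAt_const.mul (hrpow _)).add
    (continuousAt_const.mul (hrpow _))).continuousWithinAt

lemma tendsto_powerDecay_nhdsGT_zero (hα : 0 < α) (hC₁ : 0 < C₁) (hC₂ : 0 ≤ C₂) :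
    Tendsto (powerDecay α C₁ C₂) (𝓝[>] 0) atTop := by
  have h₁ : Tendsto (fun r : ℝ => C₁ * r ^ (-α)) (𝓝[>] 0) atTop :=
    (tendsto_rpow_neg_nhdsGT_zero (neg_neg_of_pos hα)).const_mul_atTop hC₁
  refine tendsto_atTop_mono' _ ?_ h₁
  filter_upwards [self_mem_nhdsWithin] with r (hr : 0 < r)
  unfold powerDecay
  have : 0 ≤ C₂ * r ^ (-α - 1) := by positivity
  linarith

lemma tendsto_powerDecay_atTop (hα : 0 < α) :
    Tendsto (powerDecay α C₁ C₂) atTop (𝓝 0) := by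
  have := ((tendsto_rpow_neg_atTop hα).const_mul C₁).add
    ((tendsto_rpow_neg_atTop (by linarith : 0 < α + 1)).const_mul C₂)
  unfold powerDecay
  simpa only [mul_zero, add_zero, neg_add'] using this

lemma rpow_mul_powerDecay_add_sub {s t : ℝ} (hs : 0 < s) (hst : 0 < s + t) :
    s ^ (α + 1) * (powerDecay α C₁ C₂ (s + t) - C₁ * s ^ (-α))
      = C₁ * (s * ((1 + t / s) ^ (-α) - 1)) + C₂ * (1 + t / s) ^ (-α - 1) := by
  have hsplit : s + t = s * (1 + t / s) := by field_simp
  have hu : 0 < 1 + t / s := pos_of_mul_pos_right (hsplit ▸ hst) hs.le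
  have e₁ : s ^ (α + 1) * s ^ (-α) = s := by rw [← Real.rpow_add hs]; norm_num
  have e₂ : s ^ (α + 1) * s ^ (-α - 1) = 1 := by rw [← Real.rpow_add hs]; norm_num
  rw [powerDecay, hsplit, Real.mul_rpow hs.le hu.le, Real.mul_rpow hs.le hu.le]
  linear_combination (C₁ * (1 + t / s) ^ (-α) - C₁) * e₁ + C₂ * (1 + t / s) ^ (-α - 1) * e₂

lemma tendsto_rpow_mul_powerDecay_add_sub (t : ℝ) :
    Tendsto (fun s => s ^ (α + 1) * (powerDecay α C₁ C₂ (s + t) - C₁ * s ^ (-α))) atTop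
      (𝓝 (C₂ - α * C₁ * t)) := by
  have h₁ := (tendsto_mul_one_add_div_rpow_sub_one (-α) t).const_mul C₁
  have hu : Tendsto (fun s : ℝ => 1 + t / s) atTop (𝓝 (1 + 0)) :=
    tendsto_const_nhds.add (tendsto_const_nhds.div_atTop tendsto_id)
  rw [add_zero] at hu
  have h₂ := ((Real.continuousAt_rpow_const 1 (-α - 1) (Or.inl one_ne_zero)).tendsto.comp
    hu).const_mul C₂
  have hlim : C₁ * (-α * t) + C₂ * 1 ^ (-α - 1) = C₂ - α * C₁ * t := by
    rw [Real.one_rpow]; ring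
  rw [← hlim]
  refine (h₁.add h₂).congr' ?_
  filter_upwards [eventually_gt_atTop 0, eventually_gt_atTop (-t)] with s hs hst
  exact (rpow_mul_powerDecay_add_sub hs (by linarith)).symm

lemma eventually_powerDecay_add_lt (hα : 0 < α) (hC₁ : 0 < C₁) {t : ℝ}
    (ht : C₂ / (α * C₁) < t) : ∀ᶠ s in atTop, powerDecay α C₁ C₂ (s + t) < C₁ * s ^ (-α) := by
  have hneg : C₂ - α * C₁ * t < 0 := by
    rw [div_lt_iff₀ (by positivity)] at ht; linarith
  filter_upwards [(tendsto_rpow_mul_powerDecay_add_sub t).eventually_lt_const hneg,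
    eventually_gt_atTop 0] with s h hs
  exact sub_neg.1 (neg_of_mul_neg_right h (Real.rpow_nonneg hs.le _))

lemma eventually_lt_powerDecay_add (hα : 0 < α) (hC₁ : 0 < C₁) {t : ℝ}
    (ht : t < C₂ / (α * C₁)) : ∀ᶠ s in atTop, C₁ * s ^ (-α) < powerDecay α C₁ C₂ (s + t) := by
  have hpos : 0 < C₂ - α * C₁ * t := by
    rw [lt_div_iff₀ (by positivity)] at ht; linarith
  filter_upwards [(tendsto_rpow_mul_powerDecay_add_sub t).eventually_const_lt hpos,
    eventually_gt_atTop 0] with s h hs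
  exact sub_pos.1 (pos_of_mul_pos_right h (Real.rpow_nonneg hs.le _))

lemma tendsto_sub_of_powerDecay_eq (hα : 0 < α) (hC₁ : 0 < C₁) (hC₂ : 0 ≤ C₂) {R : ℝ → ℝ}
    (hR : ∀ᶠ s in atTop, 0 < R s ∧ powerDecay α C₁ C₂ (R s) = C₁ * s ^ (-α)) :
    Tendsto (fun s => R s - s) atTop (𝓝 (C₂ / (α * C₁))) := by
  have hanti := strictAntiOn_powerDecay hα hC₁ hC₂
  refine tendsto_order.2 ⟨fun a ha => ?_, fun b hb => ?_⟩
  · filter_upwards [hR, eventually_lt_powerDecay_add hα hC₁ ha, eventually_gt_atTop (-a)]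
      with s ⟨hRpos, hRs⟩ hlt hsa
    have : s + a < R s :=
      (hanti.lt_iff_gt hRpos (show 0 < s + a by linarith)).1 (hRs ▸ hlt)
    linarith
  · filter_upwards [hR, eventually_powerDecay_add_lt hα hC₁ hb, eventually_gt_atTop (-b)]
      with s ⟨hRpos, hRs⟩ hlt hsb
    have : R s < s + b :=
      (hanti.lt_iff_gt (show 0 < s + b by linarith) hRpos).1 (hRs ▸ hlt)
    linarith

lemma tendsto_rpow_mul_rpow_neg_inv_nhdsGT_zero (hα : 0 < α) (hC₁ : 0 < C₁) :
    Tendsto (fun μ : ℝ => C₁ ^ (1 / α) * μ ^ (-1 / α)) (𝓝[>] 0) atTop := by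
  have hexp : -1 / α < 0 := div_neg_of_neg_of_pos (by norm_num) hα
  exact (tendsto_rpow_neg_nhdsGT_zero hexp).const_mul_atTop (by positivity)

lemma mul_rpow_mul_rpow_neg_inv (hα : α ≠ 0) (hC₁ : 0 < C₁) {μ : ℝ} (hμ : 0 ≤ μ) :
    C₁ * (C₁ ^ (1 / α) * μ ^ (-1 / α)) ^ (-α) = μ := by
  rw [Real.mul_rpow (by positivity) (by positivity), ← Real.rpow_mul hC₁.le, ← Real.rpow_mul hμ,
    show 1 / α * -α = -1 by field_simp, show -1 / α * -α = 1 by field_simp, Real.rpow_neg_one,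
    Real.rpow_one, ← mul_assoc, mul_inv_cancel₀ hC₁.ne', one_mul]

lemma tendsto_root_sub_asymptotics (hα : 0 < α) (hC₁ : 0 < C₁) (hC₂ : 0 ≤ C₂) {rp : ℝ → ℝ}
    (hrp : ∀ μ, 0 < μ → 0 < rp μ ∧ powerDecay α C₁ C₂ (rp μ) = μ) :
    Tendsto (fun μ => rp μ - C₁ ^ (1 / α) * μ ^ (-1 / α) - C₂ / (α * C₁)) (𝓝[>] 0) (𝓝 0) := by
  have hR : ∀ᶠ s in atTop,
      0 < rp (C₁ * s ^ (-α)) ∧ powerDecay α C₁ C₂ (rp (C₁ * s ^ (-α))) = C₁ * s ^ (-α) := by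
    filter_upwards [eventually_gt_atTop 0] with s hs using hrp _ (by positivity)
  have h := ((tendsto_sub_of_powerDecay_eq hα hC₁ hC₂ hR).comp
    (tendsto_rpow_mul_rpow_neg_inv_nhdsGT_zero hα hC₁)).sub_const (C₂ / (α * C₁))
  rw [sub_self] at h
  refine h.congr' ?_
  filter_upwards [self_mem_nhdsWithin] with μ (hμ : 0 < μ)
  simp only [Function.comp_apply, mul_rpow_mul_rpow_neg_inv hα.ne' hC₁ hμ.le]

end powerDecay

theorem unique_root_asymptotics_nonneg_C2_general
    (α : ℝ) (hα : 0 < α)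
    (C₁ C₂ : ℝ) (hC₁ : 0 < C₁) (hC₂ : 0 ≤ C₂)
    (h : ℝ → ℝ) (hh : ∀ r : ℝ, 0 < r → h r = C₁ * r ^ (-α) + C₂ * r ^ (-α - 1)) :
    StrictAntiOn h (Set.Ioi 0) ∧
    Tendsto h (𝓝[>] (0 : ℝ)) atTop ∧
    Tendsto h atTop (𝓝 0) ∧
    ∃ rp : ℝ → ℝ,
      (∀ μ : ℝ, 0 < μ →
        (0 < rp μ ∧ h (rp μ) = μ ∧ ∀ r : ℝ, 0 < r → h r = μ → r = rp μ)) ∧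
      Tendsto (fun μ : ℝ => rp μ - C₁ ^ (1 / α) * μ ^ (-1 / α) - C₂ / (α * C₁))
        (𝓝[>] (0 : ℝ)) (𝓝 0) := by
  have hEq : EqOn (powerDecay α C₁ C₂) h (Ioi 0) := fun r hr => (hh r hr).symm
  have hanti := (strictAntiOn_powerDecay hα hC₁ hC₂).congr hEq
  have hzero := tendsto_powerDecay_nhdsGT_zero hα hC₁ hC₂
  have hinf := tendsto_powerDecay_atTop (C₁ := C₁) (C₂ := C₂) hα
  have hsurj : Ioi 0 ⊆ powerDecay α C₁ C₂ '' Ioi 0 :=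
    isPreconnected_Ioi.intermediate_value_Ioi (l₂ := 𝓝[>] 0)
      (le_principal_iff.2 (Ioi_mem_atTop 0)) inf_le_right continuousOn_powerDecay hinf hzero
  choose! rp hrp_pos hrp_eq using fun μ (hμ : μ ∈ Ioi (0 : ℝ)) => hsurj hμ
  have hroot : ∀ μ, 0 < μ → h (rp μ) = μ := fun μ hμ => hEq (hrp_pos μ hμ) ▸ hrp_eq μ hμ
  refine ⟨hanti, hzero.congr' (eventuallyEq_nhdsWithin_of_eqOn hEq),
    hinf.congr' (hEq.eventuallyEq_of_mem (Ioi_mem_atTop 0)), rp,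
    fun μ hμ => ⟨hrp_pos μ hμ, hroot μ hμ, fun r hr hrμ => ?_⟩,
    tendsto_root_sub_asymptotics hα hC₁ hC₂ fun μ hμ => ⟨hrp_pos μ hμ, hrp_eq μ hμ⟩⟩
  exact hanti.injOn hr (hrp_pos μ hμ) (hrμ.trans (hroot μ hμ).symm)

theorem unique_root_asymptotics_nonneg_C2
    {d : ℕ} (hd : 2 ≤ d) (α : ℝ) (hα : 0 < α)
    (C₁ C₂ : ℝ) (hC₁ : 0 < C₁) (hC₂ : 0 ≤ C₂)
    (h : ℝ → ℝ) (hh : ∀ r : ℝ, 0 < r → h r = C₁ * r ^ (-α) + C₂ * r ^ (-α - 1)) :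
    StrictAntiOn h (Set.Ioi 0) ∧
    Tendsto h (𝓝[>] (0 : ℝ)) atTop ∧
    Tendsto h atTop (𝓝 0) ∧
    ∃ rp : ℝ → ℝ,
      (∀ μ : ℝ, 0 < μ →
        (0 < rp μ ∧ h (rp μ) = μ ∧ ∀ r : ℝ, 0 < r → h r = μ → r = rp μ)) ∧
      Tendsto (fun μ : ℝ => rp μ - C₁ ^ (1 / α) * μ ^ (-1 / α) - C₂ / (α * C₁))
        (𝓝[>] (0 : ℝ)) (𝓝 0) :=
  unique_root_asymptotics_nonneg_C2_general α hα C₁ C₂ hC₁ hC₂ h hh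
end
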